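/- The qKZ and dynamical operators are compatible (case of tensor products of vector representations of gl_N): for all m ∈ {1,…,n} and a ∈ {1,…,N}, the End(W)-valued function λ ↦ K_m(z;λ) is differentiable in λ_a and p λ_a (∂K_m/∂λ_a)(z;λ) = K_m(z;λ) · L_a(z;λ) − L_a(z_1,…,z_m+p,…,z_n;λ) · K_m(z;λ). Equivalently, the qKZ operator Z_m = K_m(z;λ)^{−1} T_{z_m} (where T_{z_m} shifts z_m by p) commutes with the dynamical operator D_a = p λ_a ∂/∂λ_a + L_a(z;λ). -/

import Mathlib

noncomputable section

/-- Basis of `W = (ℂ^N)^{⊗n}`: multi-indices `Fin n → Fin N`. -/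
abbrev BIdx (N n : ℕ) := Fin n → Fin N

/-- `End(W)` realized as matrices in the standard tensor basis of `W = (ℂ^N)^{⊗n}`. -/
abbrev EndW (N n : ℕ) := Matrix (BIdx N n) (BIdx N n) ℂ

/-- `E_{a,b}^{(i)}`: the matrix unit `E_{a,b}` of `gl_N` acting in the `i`-th tensor
factor of `W` (it sends the basis vector `e_{m}` to `e_{m[i ↦ a]}` if `m i = b`). -/
def Ei {N n : ℕ} (i : Fin n) (a b : Fin N) : EndW N n :=
  Matrix.of fun k m => if k = Function.update m i a ∧ m i = b then 1 else 0

/-- `E_{a,b} = Σ_i E_{a,b}^{(i)}`. -/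
def Etot {N n : ℕ} (a b : Fin N) : EndW N n := ∑ i, Ei i a b

/-- The flip `P` acting in the `i`-th and `j`-th tensor factors of `W`. -/
def Pflip {N n : ℕ} (i j : Fin n) : EndW N n :=
  Matrix.of fun k m => if k = m ∘ Equiv.swap i j then 1 else 0

/-- The rational R-matrix `R(x) = (x·Id + P)/(x+1)` acting in factors `i,j` of `W`. -/
def Rm {N n : ℕ} (x : ℂ) (i j : Fin n) : EndW N n :=
  (x + 1)⁻¹ • (x • (1 : EndW N n) + Pflip i j)

/-- `Λ^{(m)}(λ) = diag(λ_1,…,λ_N)` acting in the `m`-th tensor factor of `W`. -/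
def LamD {N n : ℕ} (lam : Fin N → ℂ) (m : Fin n) : EndW N n :=
  Matrix.diagonal fun k => lam (k m)

/-- The dynamical operator coefficient `L_a(z;λ)` on `W`. -/
def Ldyn {N n : ℕ} (z : Fin n → ℂ) (lam : Fin N → ℂ) (a : Fin N) : EndW N n :=
  (2⁻¹ : ℂ) • (Etot a a) ^ 2
  - ∑ i, z i • Ei i a a
  - ∑ b : Fin N, ∑ i : Fin n, ∑ j : Fin n, (if i < j then Ei i a b * Ei j b a else 0)
  - ∑ b ∈ Finset.univ.erase a,
      (lam b / (lam a - lam b)) • (Etot a b * Etot b a - Etot a a)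

/-- Ordered product `R^{(1,m)}(z_1−z_m−p) ⋯ R^{(m−1,m)}(z_{m−1}−z_m−p)`. -/
def Kleft {N n : ℕ} (p : ℂ) (z : Fin n → ℂ) (m : Fin n) : EndW N n :=
  (((List.finRange n).filter (fun i => i < m)).map fun i => Rm (z i - z m - p) i m).prod

/-- Ordered product `R^{(m,n)}(z_m−z_n) R^{(m,n−1)}(z_m−z_{n−1}) ⋯ R^{(m,m+1)}(z_m−z_{m+1})`. -/
def Kright {N n : ℕ} (z : Fin n → ℂ) (m : Fin n) : EndW N n :=
  (((List.finRange n).filter (fun j => m < j)).reverse.map fun j => Rm (z m - z j) m j).prod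

/-- The qKZ operator coefficient `K_m(z;λ)` on `W`. -/
def Kqkz {N n : ℕ} (p : ℂ) (z : Fin n → ℂ) (lam : Fin N → ℂ) (m : Fin n) : EndW N n :=
  (Kleft p z m)⁻¹ * LamD lam m * Kright z m

/-- The genericity condition on `z`: for `i ≠ j`, the numbers `z_i−z_j`, `z_i−z_j+p`,
`z_i−z_j−p` avoid `{1, −1}`, so all R-matrix factors are defined and invertible. -/
def ZGeneric {n : ℕ} (p : ℂ) (z : Fin n → ℂ) : Prop :=
  ∀ i j : Fin n, i ≠ j →
    ∀ x ∈ ({z i - z j, z i - z j + p, z i - z j - p} : Set ℂ), x ≠ 1 ∧ x ≠ -1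

attribute [local instance] Matrix.normedAddCommGroup Matrix.normedSpace

section Base
variable {N n : ℕ}

lemma Ei_apply (i : Fin n) (a b : Fin N) (k m : BIdx N n) :
    Ei i a b k m = if k = Function.update m i a ∧ m i = b then 1 else 0 := rfl

lemma Pflip_apply (i j : Fin n) (k m : BIdx N n) :
    Pflip i j k m = if k = m ∘ Equiv.swap i j then 1 else 0 := rfl

lemma Pflip_symm (i j : Fin n) : (Pflip i j : EndW N n) = Pflip j i := by
  unfold Pflip; rw [Equiv.swap_comm]

lemma comp_swap_comp_swap (m : BIdx N n) (i j : Fin n) :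
    (m ∘ Equiv.swap i j) ∘ Equiv.swap i j = m := by
  funext x; simp

lemma mul_apply_single_right (A B : EndW N n) (r t c : BIdx N n)
    (h : ∀ x, x ≠ c → B x t = 0) : (A * B) r t = A r c * B c t := by
  rw [Matrix.mul_apply,
    Finset.sum_eq_single c (fun x _ hx => by rw [h x hx, mul_zero]) (by simp)]

lemma mul_apply_single_left (A B : EndW N n) (r t c : BIdx N n)
    (h : ∀ x, x ≠ c → A r x = 0) : (A * B) r t = A r c * B c t := by
  rw [Matrix.mul_apply,
    Finset.sum_eq_single c (fun x _ hx => by rw [h x hx, zero_mul]) (by simp)]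

lemma Pflip_mul_Pflip (i j : Fin n) : Pflip i j * Pflip i j = (1 : EndW N n) := by
  ext k m
  rw [mul_apply_single_right _ _ _ _ (m ∘ Equiv.swap i j)
    (fun x hx => by rw [Pflip_apply, if_neg (fun h => hx h)]),
    Pflip_apply, Pflip_apply, Matrix.one_apply, comp_swap_comp_swap, if_pos rfl, mul_one]

lemma Pflip_mul_Ei (i j k : Fin n) (a b : Fin N) :
    Pflip i j * Ei k a b = Ei (Equiv.swap i j k) a b * Pflip i j := by
  have h1 : ∀ t : BIdx N n, (Function.update t k a) ∘ (Equiv.swap i j) =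
      Function.update (t ∘ Equiv.swap i j) (Equiv.swap i j k) a := by
    intro t
    funext x
    simp only [Function.comp_apply, Function.update]
    by_cases hx : x = Equiv.swap i j k
    · subst hx; simp
    · have : ¬ (Equiv.swap i j x = k) := by
        intro hc; apply hx; rw [← hc]; simp
      simp [hx, this]
  ext r t
  rw [mul_apply_single_right _ _ _ _ (Function.update t k a)
    (fun x hx => by rw [Ei_apply, if_neg (fun h => hx h.1)]),
    mul_apply_single_right _ _ _ _ (t ∘ Equiv.swap i j)
    (fun x hx => by rw [Pflip_apply, if_neg (fun h => hx h)])]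
  have h2 : (t ∘ Equiv.swap i j) (Equiv.swap i j k) = t k := by simp
  by_cases hb : t k = b <;>
    by_cases hr : r = Function.update (t ∘ Equiv.swap i j) (Equiv.swap i j k) a <;>
    simp [Pflip_apply, Ei_apply, h1, h2, hb, hr]

lemma Pflip_mul_Pflip_swap (i j k l : Fin n) :
    (Pflip i j : EndW N n) * Pflip k l
      = Pflip (Equiv.swap i j k) (Equiv.swap i j l) * Pflip i j := by
  have key : ∀ x, Equiv.swap i j (Equiv.swap (Equiv.swap i j k) (Equiv.swap i j l) x)
      = Equiv.swap k l (Equiv.swap i j x) := by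
    intro x
    rw [Equiv.swap_apply_apply]
    simp [Equiv.Perm.mul_apply]
  ext r t
  rw [mul_apply_single_right _ _ _ _ (t ∘ Equiv.swap k l)
    (fun x hx => by rw [Pflip_apply, if_neg (fun h => hx h)]),
    mul_apply_single_right _ _ _ _ (t ∘ Equiv.swap i j)
    (fun x hx => by rw [Pflip_apply (i := i), if_neg (fun h => hx h)])]
  have heq : (t ∘ Equiv.swap k l) ∘ Equiv.swap i j
      = (t ∘ Equiv.swap i j) ∘ Equiv.swap (Equiv.swap i j k) (Equiv.swap i j l) := by
    funext x
    simp only [Function.comp_apply]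
    rw [← key x]
  simp [Pflip_apply, heq]

end Base
section Base2
variable {N n : ℕ}

lemma Ei_mul_Ei_same (i : Fin n) (a b c d : Fin N) :
    (Ei i a b : EndW N n) * Ei i c d = if b = c then Ei i a d else 0 := by
  ext r t
  rw [mul_apply_single_right _ _ _ _ (Function.update t i c)
    (fun x hx => by rw [Ei_apply, if_neg (fun h => hx h.1)])]
  by_cases hbc : b = c
  · subst hbc
    by_cases hd : t i = d
    · simp [Ei_apply, hd, Function.update_idem]
    · simp [Ei_apply, hd, Function.update_idem]
  · rw [if_neg hbc]
    rw [Ei_apply, if_neg (fun h => hbc (by simpa using h.2.symm))]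
    simp

lemma Ei_mul_Ei_comm {i j : Fin n} (hij : i ≠ j) (a b c d : Fin N) :
    (Ei i a b : EndW N n) * Ei j c d = Ei j c d * Ei i a b := by
  ext r t
  rw [mul_apply_single_right _ _ _ _ (Function.update t j c)
    (fun x hx => by rw [Ei_apply, if_neg (fun h => hx h.1)]),
    mul_apply_single_right _ _ _ _ (Function.update t i a)
    (fun x hx => by rw [Ei_apply, if_neg (fun h => hx h.1)])]
  simp only [Ei_apply, Function.update_of_ne hij, Function.update_of_ne hij.symm,
    Function.update_comm hij]
  by_cases h1 : r = Function.update (Function.update t i a) j c <;>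
    by_cases h2 : t i = b <;> by_cases h3 : t j = d <;> simp [h1, h2, h3]

/-- `Ω^{(ij)}_a = Σ_b E^{(i)}_{ab} E^{(j)}_{ba}`, in the closed form `E^{(i)}_{aa} P^{(ij)}`. -/
def Om {N n : ℕ} (a : Fin N) (i j : Fin n) : EndW N n := Ei i a a * Pflip i j

lemma sum_Ei_mul_Ei {i j : Fin n} (hij : i ≠ j) (a : Fin N) :
    ∑ b, (Ei i a b : EndW N n) * Ei j b a = Om a i j := by
  ext r t
  rw [Matrix.sum_apply, Finset.sum_eq_single (t i) (fun b _ hb => by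
    rw [mul_apply_single_right _ _ _ _ (Function.update t j b)
      (fun x hx => by rw [Ei_apply, if_neg (fun h => hx h.1)]), Ei_apply,
      if_neg (fun h => hb (by simpa [Function.update_of_ne hij] using h.2.symm)), zero_mul])
    (by simp)]
  rw [mul_apply_single_right _ _ _ _ (Function.update t j (t i))
    (fun x hx => by rw [Ei_apply, if_neg (fun h => hx h.1)]),
    Om, mul_apply_single_right _ _ _ _ (t ∘ Equiv.swap i j)
    (fun x hx => by rw [Pflip_apply, if_neg (fun h => hx h)])]
  have hkey : Function.update (Function.update t j (t i)) i a
      = Function.update (t ∘ Equiv.swap i j) i a := by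
    funext x
    by_cases hxi : x = i
    · subst hxi; simp
    · by_cases hxj : x = j
      · subst hxj
        simp [Function.update_of_ne hxi, Function.update_self, hij]
      · simp [Function.update_of_ne hxi, Function.update_of_ne hxj,
          Equiv.swap_apply_of_ne_of_ne hxi hxj]
  by_cases h1 : t j = a <;>
    simp [Ei_apply, Pflip_apply, Function.update_of_ne hij, hkey,
      Equiv.swap_apply_left, h1]

lemma LamD_mul_Ei_same (lam : Fin N → ℂ) (m : Fin n) (a b : Fin N) :
    LamD lam m * Ei m a b = lam a • (Ei m a b : EndW N n) := by
  ext r t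
  rw [LamD, Matrix.diagonal_mul, Matrix.smul_apply, Ei_apply]
  by_cases h : r = Function.update t m a ∧ t m = b
  · rw [if_pos h, h.1]
    simp
  · rw [if_neg h]
    simp

lemma Ei_mul_LamD_same (lam : Fin N → ℂ) (m : Fin n) (a b : Fin N) :
    Ei m a b * LamD lam m = lam b • (Ei m a b : EndW N n) := by
  ext r t
  rw [LamD, Matrix.mul_diagonal, Matrix.smul_apply, Ei_apply]
  by_cases h : r = Function.update t m a ∧ t m = b
  · rw [if_pos h, h.2]
    simp [mul_comm]
  · rw [if_neg h]
    simp

lemma LamD_comm_Ei (lam : Fin N → ℂ) {m k : Fin n} (hkm : k ≠ m) (a b : Fin N) :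
    LamD lam m * Ei k a b = Ei k a b * LamD lam m := by
  ext r t
  rw [LamD, Matrix.diagonal_mul, Matrix.mul_diagonal, Ei_apply]
  by_cases h : r = Function.update t k a ∧ t k = b
  · rw [if_pos h, h.1, Function.update_of_ne (Ne.symm hkm)]
    ring
  · rw [if_neg h]
    simp

lemma Pflip_comm_LamD (lam : Fin N → ℂ) {m i j : Fin n} (him : i ≠ m) (hjm : j ≠ m) :
    Pflip i j * LamD lam m = LamD lam m * Pflip i j := by
  ext r t
  rw [LamD, Matrix.diagonal_mul, Matrix.mul_diagonal, Pflip_apply]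
  by_cases h : r = t ∘ Equiv.swap i j
  · rw [if_pos h, h]
    simp [Equiv.swap_apply_of_ne_of_ne (Ne.symm him) (Ne.symm hjm), mul_comm]
  · rw [if_neg h]
    simp

lemma LamD_comm_Ei_aa (lam : Fin N → ℂ) (m k : Fin n) (a : Fin N) :
    LamD lam m * Ei k a a = Ei k a a * LamD lam m := by
  by_cases h : k = m
  · subst h
    rw [LamD_mul_Ei_same, Ei_mul_LamD_same]
  · exact LamD_comm_Ei lam h a a

end Base2
section Alg
variable {N n : ℕ}

lemma Pflip_mul_Om (i j : Fin n) (a : Fin N) (p q : Fin n) :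
    Pflip i j * Om a p q
      = Om a (Equiv.swap i j p) (Equiv.swap i j q) * Pflip i j := by
  rw [Om, Om, ← mul_assoc, Pflip_mul_Ei, mul_assoc, Pflip_mul_Pflip_swap, ← mul_assoc]

lemma Pflip_comm_Etot (i j : Fin n) (a b : Fin N) :
    Pflip i j * Etot a b = Etot a b * Pflip i j := by
  rw [Etot, Finset.mul_sum, Finset.sum_mul]
  rw [← Equiv.sum_comp (Equiv.swap i j) (fun k => Ei k a b * Pflip i j)]
  exact Finset.sum_congr rfl fun k _ => Pflip_mul_Ei i j k a b

lemma Pflip_comm_one (i j : Fin n) (x : ℂ) :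
    Pflip i j * (x • (1 : EndW N n)) = (x • 1) * Pflip i j := by
  simp [mul_smul_comm, smul_mul_assoc]

lemma Rm_comm_of_Pflip_comm {i j : Fin n} {X : EndW N n} (x : ℂ)
    (h : Pflip i j * X = X * Pflip i j) : Rm x i j * X = X * Rm x i j := by
  rw [Rm, smul_mul_assoc, mul_smul_comm, add_mul, mul_add, h,
    smul_mul_assoc, mul_smul_comm, one_mul, mul_one]

lemma Rm_mul_Rm_neg {x : ℂ} (h1 : x ≠ 1) (h2 : x ≠ -1) (i j : Fin n) :
    (Rm x i j : EndW N n) * Rm (-x) i j = 1 := by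
  rw [Rm, Rm, smul_mul_assoc, mul_smul_comm, smul_smul]
  have hexp : (x • (1 : EndW N n) + Pflip i j) * ((-x) • 1 + Pflip i j)
      = (1 - x * x) • 1 := by
    simp only [mul_add, add_mul, Pflip_mul_Pflip, smul_mul_assoc, mul_smul_comm,
      one_mul, mul_one, smul_smul]
    module
  rw [hexp, smul_smul]
  have hx1 : x + 1 ≠ 0 := fun h => h2 (by linear_combination h)
  have hx2 : -x + 1 ≠ 0 := fun h => h1 (by linear_combination -h)
  have : (x + 1)⁻¹ * (-x + 1)⁻¹ * (1 - x * x) = 1 := by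
    field_simp
    ring
  rw [this, one_smul]

lemma Rm_flip {i j : Fin n} (hij : i ≠ j) (x : ℂ) (a : Fin N) :
    Rm x i j * (x • Ei i a a + Om a i j)
      = (x • Ei i a a + Om a j i) * Rm x i j := by
  have hOm : Om a j i = Pflip i j * Ei i a a := by
    rw [Om, Pflip_symm j i, Pflip_mul_Ei, Equiv.swap_apply_left]
  rw [Rm, smul_mul_assoc, mul_smul_comm]
  congr 1
  rw [hOm, Om]
  simp only [mul_add, add_mul, smul_mul_assoc, mul_smul_comm, one_mul, mul_one,
    smul_smul, mul_assoc]

end Alg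
section XSdef
variable {N n : ℕ}

/-- orientation-flip predicate -/
def flipP (m : Fin n) (S : Finset (Fin n)) (p q : Fin n) : Prop :=
  (p = m ∧ q ∈ S) ∨ (q = m ∧ p ∈ S)

instance (m : Fin n) (S : Finset (Fin n)) (p q : Fin n) : Decidable (flipP m S p q) := by
  unfold flipP; infer_instance

lemma flipP_symm (m : Fin n) (S : Finset (Fin n)) (p q : Fin n) :
    flipP m S q p ↔ flipP m S p q := by
  unfold flipP; tauto

/-- stored-orientation predicate: the ordered pair `(p,q)` is the stored orientation
of the unordered pair `{p,q}`. -/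
def stored (m : Fin n) (S : Finset (Fin n)) (p q : Fin n) : Prop :=
  (p < q ∧ ¬ flipP m S p q) ∨ (q < p ∧ flipP m S p q)

instance (m : Fin n) (S : Finset (Fin n)) (p q : Fin n) : Decidable (stored m S p q) := by
  unfold stored; infer_instance

def PairSum (m : Fin n) (a : Fin N) (S : Finset (Fin n)) : EndW N n :=
  ∑ i, ∑ j, if i < j then (if flipP m S i j then Om a j i else Om a i j) else 0

def Dg (a : Fin N) (w : Fin n → ℂ) : EndW N n := ∑ i, w i • Ei i a a

def XS (m : Fin n) (a : Fin N) (S : Finset (Fin n)) (w : Fin n → ℂ) : EndW N n :=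
  Dg a w + PairSum m a S

lemma pairsum_eq_stored (m : Fin n) (S : Finset (Fin n)) (F : Fin n → Fin n → EndW N n) :
    (∑ i, ∑ j, if i < j then (if flipP m S i j then F j i else F i j) else 0)
      = ∑ p, ∑ q, if stored m S p q then F p q else 0 := by
  have key : ∀ p q : Fin n, (if stored m S p q then F p q else 0)
      = (if p < q ∧ ¬ flipP m S p q then F p q else 0)
        + (if q < p ∧ flipP m S p q then F p q else 0) := by
    intro p q
    by_cases hlt : p < q
    · have hgt : ¬ q < p := asymm hlt
      by_cases hf : flipP m S p q <;> simp [stored, hlt, hgt, hf]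
    · by_cases hgt : q < p <;> by_cases hf : flipP m S p q <;>
        simp [stored, hlt, hgt, hf]
  simp_rw [key, Finset.sum_add_distrib]
  have h2 : (∑ p, ∑ q, if q < p ∧ flipP m S p q then F p q else 0)
      = ∑ p, ∑ q, if p < q ∧ flipP m S p q then F q p else 0 := by
    rw [Finset.sum_comm]
    refine Finset.sum_congr rfl fun p _ => Finset.sum_congr rfl fun q _ =>
      if_congr (and_congr_right fun _ => flipP_symm m S p q) rfl rfl
  rw [h2, ← Finset.sum_add_distrib]
  refine Finset.sum_congr rfl fun p _ => ?_
  rw [← Finset.sum_add_distrib]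
  refine Finset.sum_congr rfl fun q _ => ?_
  by_cases hlt : p < q <;> by_cases hf : flipP m S p q <;> simp [hlt, hf]

set_option maxHeartbeats 1000000 in
lemma stored_swap_iff {m α β k : Fin n} (S : Finset (Fin n)) (hαβ : α < β)
    (hm : (α = m ∧ β = k) ∨ (β = m ∧ α = k))
    (hS : ∀ l, l ∈ S ↔ α < l ∧ l < β) (p q : Fin n) :
    stored m S (Equiv.swap α β p) (Equiv.swap α β q) ↔ stored m (insert k S) p q := by
  have hne : α ≠ β := ne_of_lt hαβ
  have hne' : β ≠ α := hne.symm
  rcases hm with ⟨hm, hk⟩ | ⟨hm, hk⟩ <;> subst hm <;> subst hk <;>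
    by_cases hp1 : p = α <;> by_cases hp2 : p = β <;>
    by_cases hq1 : q = α <;> by_cases hq2 : q = β <;>
    simp only [stored, flipP, Finset.mem_insert, hS, hp1, hp2, hq1, hq2,
      Equiv.swap_apply_def, if_true, if_false, eq_self_iff_true, hne, hne',
      ite_true, ite_false, not_false_iff, and_true, true_and, and_false, false_and,
      or_false, false_or, not_true, not_false_eq_true, iff_self,
      lt_self_iff_false, hαβ, asymm hαβ, not_lt_of_gt hαβ] <;>
    simp only [Fin.lt_def, Fin.ext_iff] at hαβ hp1 hp2 hq1 hq2 ⊢ <;>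
    omega

end XSdef
section StepLemma
variable {N n : ℕ}

lemma Pflip_mul_PairSum {m α β k : Fin n} (a : Fin N) (S : Finset (Fin n)) (hαβ : α < β)
    (hm : (α = m ∧ β = k) ∨ (β = m ∧ α = k))
    (hS : ∀ l, l ∈ S ↔ α < l ∧ l < β) :
    Pflip α β * PairSum m a S = PairSum m a (insert k S) * Pflip α β := by
  rw [PairSum, Finset.mul_sum]
  have step1 : ∀ i : Fin n,
      Pflip α β * (∑ j, if i < j then (if flipP m S i j then Om a j i else Om a i j) else 0)
      = (∑ j, if i < j then
          (if flipP m S i j then Om a (Equiv.swap α β j) (Equiv.swap α β i)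
            else Om a (Equiv.swap α β i) (Equiv.swap α β j)) else 0) * Pflip α β := by
    intro i
    rw [Finset.mul_sum, Finset.sum_mul]
    refine Finset.sum_congr rfl fun j _ => ?_
    by_cases hlt : i < j
    · by_cases hf : flipP m S i j <;> simp only [hlt, hf, if_true, if_false, ite_true,
        ite_false, Pflip_mul_Om]
    · simp [hlt]
  simp_rw [step1, ← Finset.sum_mul]
  congr 1
  rw [pairsum_eq_stored m S (fun p q => Om a (Equiv.swap α β p) (Equiv.swap α β q)),
    PairSum, pairsum_eq_stored m (insert k S) (fun p q => Om a p q)]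
  refine Fintype.sum_equiv (Equiv.swap α β) _ _ fun p => ?_
  refine Fintype.sum_equiv (Equiv.swap α β) _ _ fun q => ?_
  have hst := stored_swap_iff S hαβ hm hS (Equiv.swap α β p) (Equiv.swap α β q)
  rw [Equiv.swap_apply_self, Equiv.swap_apply_self] at hst
  exact if_congr hst rfl rfl

lemma Pflip_mul_Dg {α β : Fin n} (a : Fin N) (hne : α ≠ β) (w : Fin n → ℂ) :
    Pflip α β * Dg a w
      = (Dg a w + (w β - w α) • Ei α a a + (w α - w β) • Ei β a a) * Pflip α β := by
  rw [Dg, Finset.mul_sum]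
  have e1 : ∀ i : Fin n, Pflip α β * (w i • Ei i a a)
      = (w i • Ei (Equiv.swap α β i) a a) * Pflip α β := by
    intro i
    rw [mul_smul_comm, Pflip_mul_Ei, smul_mul_assoc]
  simp_rw [e1, ← Finset.sum_mul]
  congr 1
  rw [← Equiv.sum_comp (Equiv.swap α β) (fun i => w i • Ei (Equiv.swap α β i) a a)]
  simp_rw [Equiv.swap_apply_self]
  have e2 : ∀ i : Fin n, w (Equiv.swap α β i) • (Ei i a a : EndW N n)
      = w i • Ei i a a + ((if i = α then (w β - w α) • Ei α a a else 0)
          + (if i = β then (w α - w β) • Ei β a a else 0)) := by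
    intro i
    by_cases h1 : i = α
    · subst h1
      rw [if_pos rfl, if_neg hne, Equiv.swap_apply_left]
      module
    · by_cases h2 : i = β
      · subst h2
        rw [if_neg h1, if_pos rfl, Equiv.swap_apply_right]
        module
      · rw [if_neg h1, if_neg h2, Equiv.swap_apply_of_ne_of_ne h1 h2]
        module
  simp_rw [e2, Finset.sum_add_distrib, Finset.sum_ite_eq' Finset.univ,
    Finset.mem_univ, if_true]
  rw [← Dg]
  module

lemma XS_insert {m α β k : Fin n} (a : Fin N) (S : Finset (Fin n)) (hαβ : α < β)
    (hm : (α = m ∧ β = k) ∨ (β = m ∧ α = k))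
    (hS : ∀ l, l ∈ S ↔ α < l ∧ l < β) (w : Fin n → ℂ) :
    XS m a (insert k S) w = XS m a S w - Om a α β + Om a β α := by
  rw [XS, XS, PairSum, PairSum]
  have key : ∀ i j : Fin n,
      (if i < j then (if flipP m (insert k S) i j then Om a j i else Om a i j) else 0)
      = (if i < j then (if flipP m S i j then Om a j i else Om a i j) else 0)
        + (if i = α ∧ j = β then (Om a β α - Om a α β) else 0) := by
    intro i j
    have hne : α ≠ β := ne_of_lt hαβ
    by_cases hij : i = α ∧ j = β
    · obtain ⟨h1, h2⟩ := hij
      have hfl : flipP m (insert k S) α β := by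
        unfold flipP
        rcases hm with ⟨hm1, hm2⟩ | ⟨hm1, hm2⟩
        · exact Or.inl ⟨hm1, Finset.mem_insert.mpr (Or.inl hm2)⟩
        · exact Or.inr ⟨hm1, Finset.mem_insert.mpr (Or.inl hm2)⟩
      have hnf : ¬ flipP m S α β := by
        unfold flipP
        rintro (⟨g1, g2⟩ | ⟨g1, g2⟩)
        · rw [hS] at g2
          exact absurd g2.2 (lt_irrefl β)
        · rw [hS] at g2
          exact absurd g2.1 (lt_irrefl α)
      rw [h1, h2, if_pos hαβ, if_pos hαβ, if_pos hfl, if_neg hnf,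
        if_pos (show α = α ∧ β = β from ⟨rfl, rfl⟩)]
      abel
    · rw [if_neg hij, add_zero]
      by_cases hlt : i < j
      · rw [if_pos hlt, if_pos hlt]
        have : flipP m (insert k S) i j ↔ flipP m S i j := by
          unfold flipP
          simp only [Finset.mem_insert]
          constructor
          · rintro (⟨h1, h2 | h2⟩ | ⟨h1, h2 | h2⟩)
            · exfalso
              rcases hm with ⟨hm1, hm2⟩ | ⟨hm1, hm2⟩
              · exact hij ⟨h1.trans hm1.symm, h2.trans hm2.symm⟩
              · rw [h1, ← hm1, h2, ← hm2] at hlt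
                exact absurd hlt (asymm hαβ)
            · exact Or.inl ⟨h1, h2⟩
            · exfalso
              rcases hm with ⟨hm1, hm2⟩ | ⟨hm1, hm2⟩
              · rw [h1, ← hm1, h2, ← hm2] at hlt
                exact absurd hlt (asymm hαβ)
              · exact hij ⟨h2.trans hm2.symm, h1.trans hm1.symm⟩
            · exact Or.inr ⟨h1, h2⟩
          · rintro (⟨h1, h2⟩ | ⟨h1, h2⟩)
            · exact Or.inl ⟨h1, Or.inr h2⟩
            · exact Or.inr ⟨h1, Or.inr h2⟩
        rw [if_congr this rfl rfl]
      · rw [if_neg hlt, if_neg hlt]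
  simp_rw [key, Finset.sum_add_distrib]
  have collapse : (∑ i : Fin n, ∑ j : Fin n,
      if i = α ∧ j = β then (Om a β α - Om a α β : EndW N n) else 0)
      = Om a β α - Om a α β := by
    rw [Finset.sum_eq_single α
      (fun i _ hi => Finset.sum_eq_zero fun j _ => if_neg (fun h => hi h.1)) (by simp),
      Finset.sum_eq_single β (fun j _ hj => if_neg (fun h => hj h.2)) (by simp),
      if_pos ⟨rfl, rfl⟩]
  rw [collapse]
  abel

end StepLemma
section Step
variable {N n : ℕ}

lemma Rm_step {m α β k : Fin n} (a : Fin N) (S : Finset (Fin n)) (hαβ : α < β)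
    (hm : (α = m ∧ β = k) ∨ (β = m ∧ α = k))
    (hS : ∀ l, l ∈ S ↔ α < l ∧ l < β) (w : Fin n → ℂ) :
    Rm (w α - w β) α β * XS m a S w = XS m a (insert k S) w * Rm (w α - w β) α β := by
  rw [Rm, smul_mul_assoc, mul_smul_comm]
  congr 1
  have hP : Pflip α β * XS m a S w
      = (XS m a S w + (w β - w α) • Ei α a a + (w α - w β) • Ei β a a
          + (PairSum m a (insert k S) - PairSum m a S)) * Pflip α β := by
    rw [XS, mul_add, Pflip_mul_Dg a (ne_of_lt hαβ) w, Pflip_mul_PairSum a S hαβ hm hS]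
    rw [← add_mul]
    congr 1
    abel
  have hL1 : XS m a (insert k S) w = XS m a S w - Om a α β + Om a β α :=
    XS_insert a S hαβ hm hS w
  have hPd : PairSum m a (insert k S) - PairSum m a S = Om a β α - Om a α β := by
    have := hL1
    rw [XS, XS] at this
    have h2 : Dg a w + PairSum m a (insert k S)
        = Dg a w + (PairSum m a S - Om a α β + Om a β α) := by
      rw [this]; abel
    have h3 := add_left_cancel h2
    rw [h3]; abel
  have hOm1 : Om a α β = Ei α a a * Pflip α β := rfl
  have hOm2 : Om a β α = Ei β a a * Pflip α β := by
    rw [Om, Pflip_symm β α]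
  rw [add_mul, mul_add, hP, hL1, hPd, hOm1, hOm2]
  simp only [smul_mul_assoc, mul_smul_comm, one_mul, mul_one, sub_mul, add_mul,
    mul_assoc, Pflip_mul_Pflip]
  module

/-- the part of `Ldyn` invariant under all R-matrices -/
def Sv (lam : Fin N → ℂ) (a : Fin N) : EndW N n :=
  (2⁻¹ : ℂ) • (Etot a a) ^ 2
  - ∑ b ∈ Finset.univ.erase a,
      (lam b / (lam a - lam b)) • (Etot a b * Etot b a - Etot a a)

lemma Pflip_comm_Sv (lam : Fin N → ℂ) (a : Fin N) (i j : Fin n) :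
    Pflip i j * (Sv lam a : EndW N n) = Sv lam a * Pflip i j := by
  have hc : ∀ c d : Fin N, Commute (Pflip i j : EndW N n) (Etot c d) :=
    fun c d => Pflip_comm_Etot i j c d
  unfold Sv
  exact (((hc a a).pow_right 2).smul_right _).sub_right
    (Commute.sum_right _ _ _ fun b _ =>
      ((((hc a b).mul_right (hc b a)).sub_right (hc a a)).smul_right _))

lemma Rm_comm_Sv (lam : Fin N → ℂ) (a : Fin N) (x : ℂ) (i j : Fin n) :
    Rm x i j * (Sv lam a : EndW N n) = Sv lam a * Rm x i j :=
  Rm_comm_of_Pflip_comm x (Pflip_comm_Sv lam a i j)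

lemma Ldyn_eq (z : Fin n → ℂ) (lam : Fin N → ℂ) (a : Fin N) (m : Fin n) :
    Ldyn z lam a = Sv lam a - XS m a ∅ z := by
  have hC : (∑ b : Fin N, ∑ i : Fin n, ∑ j : Fin n,
      (if i < j then Ei i a b * Ei j b a else 0 : EndW N n)) = PairSum m a ∅ := by
    rw [PairSum, Finset.sum_comm]
    refine Finset.sum_congr rfl fun i _ => ?_
    rw [Finset.sum_comm]
    refine Finset.sum_congr rfl fun j _ => ?_
    by_cases hlt : i < j
    · have hff : ¬ flipP m ∅ i j := by
        unfold flipP; simp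
      rw [if_neg hff, ← sum_Ei_mul_Ei (ne_of_lt hlt) a]
      simp [hlt]
    · simp [hlt]
  rw [Ldyn, Sv, XS, Dg, hC]
  abel

lemma prod_conj_of_comm (L : List (EndW N n)) (X : EndW N n)
    (h : ∀ A ∈ L, A * X = X * A) : L.prod * X = X * L.prod := by
  induction L with
  | nil => simp
  | cons A L' ih =>
    rw [List.prod_cons, mul_assoc, ih (fun B hB => h B (List.mem_cons_of_mem A hB)),
      ← mul_assoc, h A (List.mem_cons_self), mul_assoc]

lemma conjR (w : Fin n → ℂ) (m : Fin n) (a : Fin N) (M : List (Fin n))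
    (hpw : M.Pairwise (· > ·)) (hmm : ∀ j ∈ M, m < j)
    (hcl : ∀ l j, j ∈ M → m < l → l < j → l ∈ M) :
    ((M.map fun j => Rm (w m - w j) m j).prod) * XS m a ∅ w
      = XS m a M.toFinset w * ((M.map fun j => Rm (w m - w j) m j).prod) := by
  induction M with
  | nil => simp
  | cons j M' ih =>
    have hpw' : M'.Pairwise (· > ·) := (List.pairwise_cons.mp hpw).2
    have hgt : ∀ l ∈ M', l < j := fun l hl => (List.pairwise_cons.mp hpw).1 l hl
    have hmm' : ∀ l ∈ M', m < l := fun l hl => hmm l (List.mem_cons_of_mem j hl)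
    have hcl' : ∀ l i, i ∈ M' → m < l → l < i → l ∈ M' := by
      intro l i hi h1 h2
      have hlj : l < j := lt_trans h2 (hgt i hi)
      have : l ∈ j :: M' := hcl l i (List.mem_cons_of_mem j hi) h1 h2
      rcases List.mem_cons.mp this with h | h
      · exact absurd hlj (by rw [h]; exact lt_irrefl j)
      · exact h
    have hS : ∀ l, l ∈ M'.toFinset ↔ m < l ∧ l < j := by
      intro l
      rw [List.mem_toFinset]
      constructor
      · exact fun hl => ⟨hmm' l hl, hgt l hl⟩
      · rintro ⟨h1, h2⟩
        have : l ∈ j :: M' := hcl l j (List.mem_cons_self) h1 h2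
        rcases List.mem_cons.mp this with h | h
        · exact absurd h (ne_of_lt h2)
        · exact h
    have hmj : m < j := hmm j (List.mem_cons_self)
    have step := Rm_step (m := m) (α := m) (β := j) (k := j) a M'.toFinset hmj
      (Or.inl ⟨rfl, rfl⟩) hS w
    rw [List.map_cons, List.prod_cons, mul_assoc,
      ih hpw' hmm' hcl', ← mul_assoc, step, List.toFinset_cons, mul_assoc]

lemma conjL (w : Fin n → ℂ) (m : Fin n) (a : Fin N) (M : List (Fin n))
    (hpw : M.Pairwise (· < ·)) (hmm : ∀ i ∈ M, i < m)
    (hcl : ∀ l i, i ∈ M → i < l → l < m → l ∈ M) :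
    ((M.map fun i => Rm (w i - w m) i m).prod) * XS m a ∅ w
      = XS m a M.toFinset w * ((M.map fun i => Rm (w i - w m) i m).prod) := by
  induction M with
  | nil => simp
  | cons i M' ih =>
    have hpw' : M'.Pairwise (· < ·) := (List.pairwise_cons.mp hpw).2
    have hgt : ∀ l ∈ M', i < l := fun l hl => (List.pairwise_cons.mp hpw).1 l hl
    have hmm' : ∀ l ∈ M', l < m := fun l hl => hmm l (List.mem_cons_of_mem i hl)
    have hcl' : ∀ l q, q ∈ M' → q < l → l < m → l ∈ M' := by
      intro l q hq h1 h2
      have hli : i < l := lt_trans (hgt q hq) h1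
      have : l ∈ i :: M' := hcl l q (List.mem_cons_of_mem i hq) h1 h2
      rcases List.mem_cons.mp this with h | h
      · exact absurd hli (by rw [h]; exact lt_irrefl i)
      · exact h
    have hS : ∀ l, l ∈ M'.toFinset ↔ i < l ∧ l < m := by
      intro l
      rw [List.mem_toFinset]
      constructor
      · exact fun hl => ⟨hgt l hl, hmm' l hl⟩
      · rintro ⟨h1, h2⟩
        have : l ∈ i :: M' := hcl l i (List.mem_cons_self) h1 h2
        rcases List.mem_cons.mp this with h | h
        · exact absurd h.symm (ne_of_lt h1)
        · exact h
    have him : i < m := hmm i (List.mem_cons_self)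
    have step := Rm_step (m := m) (α := i) (β := m) (k := i) a M'.toFinset him
      (Or.inr ⟨rfl, rfl⟩) hS w
    rw [List.map_cons, List.prod_cons, mul_assoc,
      ih hpw' hmm' hcl', ← mul_assoc, step, List.toFinset_cons, mul_assoc]

lemma prod_two_sided_inv (L : List (EndW N n))
    (h : ∀ A ∈ L, ∃ B, A * B = 1 ∧ B * A = 1) :
    ∃ C, L.prod * C = 1 ∧ C * L.prod = 1 := by
  induction L with
  | nil => exact ⟨1, by simp⟩
  | cons A L' ih =>
    obtain ⟨C', hC1, hC2⟩ := ih (fun B hB => h B (List.mem_cons_of_mem A hB))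
    obtain ⟨B, hB1, hB2⟩ := h A (List.mem_cons_self)
    refine ⟨C' * B, ?_, ?_⟩
    · rw [List.prod_cons, mul_assoc, ← mul_assoc L'.prod, hC1, one_mul, hB1]
    · rw [List.prod_cons, mul_assoc, ← mul_assoc B, hB2, one_mul, hC2]

end Step
section Final
variable {N n : ℕ}

lemma LamD_comm_Etot_aa (lam : Fin N → ℂ) (m : Fin n) (a : Fin N) :
    LamD lam m * Etot a a = Etot a a * LamD lam m := by
  rw [Etot, Finset.mul_sum, Finset.sum_mul]
  exact Finset.sum_congr rfl fun i _ => LamD_comm_Ei_aa lam m i a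

lemma LamD_comm_Etot_ab (lam : Fin N → ℂ) (m : Fin n) (a b : Fin N) :
    LamD lam m * Etot a b
      = Etot a b * LamD lam m + (lam a - lam b) • Ei m a b := by
  rw [Etot, Finset.mul_sum, Finset.sum_mul]
  have key : ∀ i : Fin n, LamD lam m * Ei i a b
      = Ei i a b * LamD lam m
        + (if i = m then (lam a - lam b) • (Ei m a b : EndW N n) else 0) := by
    intro i
    by_cases h : i = m
    · subst h
      rw [if_pos rfl, LamD_mul_Ei_same, Ei_mul_LamD_same]
      module
    · rw [if_neg h, LamD_comm_Ei lam h, add_zero]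
  simp_rw [key, Finset.sum_add_distrib, Finset.sum_ite_eq' Finset.univ,
    Finset.mem_univ, if_true]

lemma F2 (lam : Fin N → ℂ) (hlam : Function.Injective lam) (m : Fin n) (a : Fin N) :
    LamD lam m * (Sv lam a : EndW N n) - Sv lam a * LamD lam m
      = - ∑ b ∈ Finset.univ.erase a,
          lam b • (Ei m a b * Etot b a - Etot a b * Ei m b a) := by
  have hE2 : LamD lam m * ((2⁻¹:ℂ) • (Etot a a : EndW N n) ^ 2)
      = ((2⁻¹:ℂ) • (Etot a a : EndW N n) ^ 2) * LamD lam m := by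
    have hc : Commute (LamD lam m) (Etot a a : EndW N n) :=
      LamD_comm_Etot_aa lam m a
    exact ((hc.pow_right 2).smul_right _).eq
  have hsum : ∀ b ∈ Finset.univ.erase a,
      LamD lam m * ((lam b / (lam a - lam b)) • (Etot a b * Etot b a - Etot a a))
        - ((lam b / (lam a - lam b)) • (Etot a b * Etot b a - Etot a a)) * LamD lam m
      = lam b • (Ei m a b * Etot b a - Etot a b * Ei m b a) := by
    intro b hb
    have hba : lam a - lam b ≠ 0 := by
      refine sub_ne_zero.mpr fun h => (Finset.mem_erase.mp hb).1 (hlam h.symm)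
    have h1 := LamD_comm_Etot_ab lam m a b
    have h2 := LamD_comm_Etot_ab lam m b a
    have h3 := LamD_comm_Etot_aa lam m a
    have hX : LamD lam m * (Etot a b * Etot b a)
        = (Etot a b * Etot b a) * LamD lam m
          + ((lam a - lam b) • (Ei m a b * Etot b a)
            - (lam a - lam b) • (Etot a b * Ei m b a)) := by
      rw [← mul_assoc, h1, add_mul, mul_assoc, h2]
      simp only [mul_add, mul_smul_comm, smul_mul_assoc, mul_assoc]
      have : lam b - lam a = -(lam a - lam b) := by ring
      rw [this]
      module
    rw [mul_smul_comm, smul_mul_assoc, ← smul_sub, mul_sub, sub_mul, hX, h3]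
    have hstuff : ((Etot a b * Etot b a) * LamD lam m
          + ((lam a - lam b) • (Ei m a b * Etot b a)
            - (lam a - lam b) • (Etot a b * Ei m b a))
          - Etot a a * LamD lam m)
        - ((Etot a b * Etot b a) * LamD lam m - Etot a a * LamD lam m)
        = (lam a - lam b) • ((Ei m a b * Etot b a) - (Etot a b * Ei m b a)) := by
      rw [smul_sub]
      abel
    rw [hstuff, smul_smul, div_mul_cancel₀ _ hba]
  unfold Sv
  rw [mul_sub, sub_mul, Finset.mul_sum, Finset.sum_mul, hE2]
  have habel : ∀ (A X Y : EndW N n), (A - X) - (A - Y) = -(X - Y) := by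
    intros; abel
  rw [habel, ← Finset.sum_sub_distrib, Finset.sum_congr rfl hsum]

lemma Dg_part (p : ℂ) (z : Fin n → ℂ) (lam : Fin N → ℂ) (m : Fin n) (a : Fin N) :
    Dg a (Function.update z m (z m + p)) * LamD lam m - LamD lam m * Dg a z
      = (p * lam a) • Ei m a a := by
  rw [Dg, Dg, Finset.sum_mul, Finset.mul_sum, ← Finset.sum_sub_distrib]
  have key : ∀ i : Fin n,
      (Function.update z m (z m + p) i) • (Ei i a a : EndW N n) * LamD lam m
        - LamD lam m * z i • Ei i a a
      = if i = m then (p * lam a) • (Ei m a a : EndW N n) else 0 := by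
    intro i
    rw [mul_smul_comm, LamD_comm_Ei_aa, smul_mul_assoc]
    by_cases h : i = m
    · subst h
      rw [if_pos rfl, Function.update_self, Ei_mul_LamD_same]
      module
    · rw [if_neg h, Function.update_of_ne h, sub_self]
  rw [Finset.sum_congr rfl (fun i _ => key i),
    Finset.sum_ite_eq' Finset.univ m (fun _ => (p * lam a) • (Ei m a a : EndW N n))]
  simp

end Final
section PairPart
variable {N n : ℕ}

lemma Om_comm_LamD (lam : Fin N → ℂ) {i j m : Fin n} (him : i ≠ m) (hjm : j ≠ m)
    (a : Fin N) : LamD lam m * Om a i j = Om a i j * LamD lam m := by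
  rw [Om, ← mul_assoc, LamD_comm_Ei_aa, mul_assoc, ← Pflip_comm_LamD lam him hjm,
    ← mul_assoc]

lemma h_term (lam : Fin N → ℂ) {k m : Fin n} (hkm : k ≠ m) (a : Fin N) :
    Om a m k * LamD lam m - LamD lam m * Om a k m
      = ∑ b, lam b • (Ei m a b * Ei k b a - Ei k a b * Ei m b a) := by
  rw [← sum_Ei_mul_Ei (Ne.symm hkm) a, ← sum_Ei_mul_Ei hkm a,
    Finset.sum_mul, Finset.mul_sum, ← Finset.sum_sub_distrib]
  refine Finset.sum_congr rfl fun b _ => ?_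
  rw [smul_sub]
  congr 1
  · rw [mul_assoc, ← LamD_comm_Ei lam hkm b a, ← mul_assoc, Ei_mul_LamD_same,
      smul_mul_assoc]
  · rw [← mul_assoc, LamD_comm_Ei lam hkm a b, mul_assoc, LamD_mul_Ei_same,
      mul_smul_comm]

lemma Ei_aa_comm_Etot_aa (m : Fin n) (a : Fin N) :
    (Ei m a a : EndW N n) * Etot a a = Etot a a * Ei m a a := by
  rw [Etot, Finset.mul_sum, Finset.sum_mul]
  refine Finset.sum_congr rfl fun k _ => ?_
  by_cases h : k = m
  · subst h; rfl
  · exact Ei_mul_Ei_comm (fun hc => h hc.symm) a a a a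

lemma sum_h (lam : Fin N → ℂ) (m : Fin n) (a : Fin N) :
    ∑ k ∈ Finset.univ.erase m, ((Om a m k : EndW N n) * LamD lam m - LamD lam m * Om a k m)
      = ∑ b ∈ Finset.univ.erase a,
          lam b • (Ei m a b * Etot b a - Etot a b * Ei m b a) := by
  rw [Finset.sum_congr rfl (fun k hk => h_term lam (Finset.mem_erase.mp hk).1 a),
    Finset.sum_comm]
  have key : ∀ b : Fin N,
      (∑ k ∈ Finset.univ.erase m, lam b • (Ei m a b * Ei k b a - Ei k a b * Ei m b a))
      = lam b • ((Ei m a b : EndW N n) * Etot b a - Etot a b * Ei m b a) := by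
    intro b
    rw [← Finset.smul_sum, Finset.sum_sub_distrib, ← Finset.mul_sum, ← Finset.sum_mul,
      Finset.sum_erase_eq_sub (Finset.mem_univ m), Finset.sum_erase_eq_sub (Finset.mem_univ m)]
    rw [← Etot, ← Etot, mul_sub, sub_mul]
    congr 1
    abel
  rw [Finset.sum_congr rfl (fun b _ => key b)]
  rw [← Finset.sum_erase_add _ _ (Finset.mem_univ a)]
  have : lam a • ((Ei m a a : EndW N n) * Etot a a - Etot a a * Ei m a a) = 0 := by
    rw [Ei_aa_comm_Etot_aa, sub_self, smul_zero]
  rw [this, add_zero]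

lemma Pair_part (lam : Fin N → ℂ) (m : Fin n) (a : Fin N) :
    PairSum m a (Finset.univ.filter fun l => l < m) * LamD lam m
      - LamD lam m * PairSum m a (Finset.univ.filter fun l => m < l)
    = ∑ b ∈ Finset.univ.erase a,
        lam b • (Ei m a b * Etot b a - Etot a b * Ei m b a) := by
  rw [PairSum, PairSum, Finset.sum_mul, Finset.mul_sum, ← Finset.sum_sub_distrib]
  simp_rw [Finset.sum_mul, Finset.mul_sum, ← Finset.sum_sub_distrib]
  have key : ∀ i j : Fin n,
      ((if i < j then (if flipP m (Finset.univ.filter fun l => l < m) i j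
            then Om a j i else Om a i j) else 0) * LamD lam m
        - LamD lam m * (if i < j then (if flipP m (Finset.univ.filter fun l => m < l) i j
            then Om a j i else Om a i j) else 0))
      = (if i = m ∧ i < j then ((Om a m j : EndW N n) * LamD lam m - LamD lam m * Om a j m) else 0)
        + (if j = m ∧ i < j then ((Om a m i : EndW N n) * LamD lam m - LamD lam m * Om a i m) else 0) := by
    intro i j
    by_cases hlt : i < j
    · by_cases him : i = m
      · have hjm : ¬ j = m := by
          intro h; rw [him, h] at hlt; exact lt_irrefl m hlt
        have hfa : ¬ flipP m (Finset.univ.filter fun l => l < m) i j := by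
          rintro (⟨h1, h2⟩ | ⟨h1, h2⟩)
          · rw [Finset.mem_filter] at h2
            rw [him] at hlt
            exact absurd h2.2 (asymm hlt)
          · exact hjm h1
        have hfb : flipP m (Finset.univ.filter fun l => m < l) i j := by
          refine Or.inl ⟨him, ?_⟩
          rw [Finset.mem_filter]
          exact ⟨Finset.mem_univ j, him ▸ hlt⟩
        rw [if_pos hlt, if_pos hlt, if_neg hfa, if_pos hfb,
          if_pos ⟨him, hlt⟩, if_neg (fun h => hjm h.1), add_zero, him]
      · by_cases hjm : j = m
        · have hfa : flipP m (Finset.univ.filter fun l => l < m) i j := by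
            refine Or.inr ⟨hjm, ?_⟩
            rw [Finset.mem_filter]
            exact ⟨Finset.mem_univ i, hjm ▸ hlt⟩
          have hfb : ¬ flipP m (Finset.univ.filter fun l => m < l) i j := by
            rintro (⟨h1, h2⟩ | ⟨h1, h2⟩)
            · exact him h1
            · rw [Finset.mem_filter] at h2
              rw [hjm] at hlt
              exact absurd h2.2 (asymm hlt)
          rw [if_pos hlt, if_pos hlt, if_pos hfa, if_neg hfb,
            if_neg (fun h => him h.1), if_pos ⟨hjm, hlt⟩, zero_add, hjm]
        · have hfa : ¬ flipP m (Finset.univ.filter fun l => l < m) i j := by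
            rintro (⟨h1, h2⟩ | ⟨h1, h2⟩)
            · exact him h1
            · exact hjm h1
          have hfb : ¬ flipP m (Finset.univ.filter fun l => m < l) i j := by
            rintro (⟨h1, h2⟩ | ⟨h1, h2⟩)
            · exact him h1
            · exact hjm h1
          rw [if_pos hlt, if_pos hlt, if_neg hfa, if_neg hfb,
            if_neg (fun h => him h.1), if_neg (fun h => hjm h.1),
            Om_comm_LamD lam him hjm a, sub_self, add_zero]
    · rw [if_neg hlt, if_neg hlt, zero_mul, mul_zero, sub_self,
        if_neg (fun h => hlt h.2), if_neg (fun h => hlt h.2), add_zero]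
  rw [Finset.sum_congr rfl (fun i _ => Finset.sum_congr rfl (fun j _ => key i j))]
  simp_rw [Finset.sum_add_distrib]
  have hfirst : (∑ i : Fin n, ∑ j : Fin n,
      if i = m ∧ i < j then ((Om a m j : EndW N n) * LamD lam m - LamD lam m * Om a j m) else 0)
      = ∑ k : Fin n, if m < k then ((Om a m k : EndW N n) * LamD lam m - LamD lam m * Om a k m) else 0 := by
    have inner : ∀ i : Fin n, (∑ j : Fin n,
        if i = m ∧ i < j then ((Om a m j : EndW N n) * LamD lam m - LamD lam m * Om a j m) else 0)
        = if i = m then (∑ k : Fin n, if m < k then ((Om a m k : EndW N n) * LamD lam m - LamD lam m * Om a k m) else 0) else 0 := by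
      intro i
      by_cases him : i = m
      · rw [if_pos him]
        refine Finset.sum_congr rfl fun j _ => ?_
        rw [him]
        by_cases h : m < j
        · rw [if_pos ⟨rfl, h⟩, if_pos h]
        · rw [if_neg (fun hc => h hc.2), if_neg h]
      · rw [if_neg him]
        exact Finset.sum_eq_zero fun j _ => if_neg (fun hc => him hc.1)
    rw [Finset.sum_congr rfl (fun i _ => inner i), Finset.sum_ite_eq' Finset.univ m]
    simp
  have hsecond : (∑ i : Fin n, ∑ j : Fin n,
      if j = m ∧ i < j then ((Om a m i : EndW N n) * LamD lam m - LamD lam m * Om a i m) else 0)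
      = ∑ k : Fin n, if k < m then ((Om a m k : EndW N n) * LamD lam m - LamD lam m * Om a k m) else 0 := by
    refine Finset.sum_congr rfl fun i _ => ?_
    rw [Finset.sum_eq_single m (fun j _ hj => if_neg (fun hc => hj hc.1)) (by simp)]
    by_cases h : i < m
    · rw [if_pos ⟨rfl, h⟩, if_pos h]
    · rw [if_neg (fun hc => h hc.2), if_neg h]
  rw [hfirst, hsecond, ← Finset.sum_add_distrib]
  have combine : ∀ k : Fin n,
      ((if m < k then ((Om a m k : EndW N n) * LamD lam m - LamD lam m * Om a k m) else 0)
        + (if k < m then ((Om a m k : EndW N n) * LamD lam m - LamD lam m * Om a k m) else 0))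
      = if k ≠ m then ((Om a m k : EndW N n) * LamD lam m - LamD lam m * Om a k m) else 0 := by
    intro k
    rcases lt_trichotomy k m with h | h | h
    · rw [if_pos h, if_neg (asymm h), if_pos (ne_of_lt h), zero_add]
    · rw [if_neg (h ▸ lt_irrefl m), if_neg (h ▸ lt_irrefl m), if_neg (by simp [h]), add_zero]
    · rw [if_pos h, if_neg (asymm h), if_pos (ne_of_gt h), add_zero]
  rw [Finset.sum_congr rfl (fun k _ => combine k), ← Finset.sum_filter,
    Finset.filter_ne', sum_h]

end PairPart
section Assemble
variable {N n : ℕ}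

lemma LamD_update (lam : Fin N → ℂ) (a : Fin N) (m : Fin n) (t : ℂ) :
    LamD (Function.update lam a t) m
      = t • (Ei m a a : EndW N n) + LamD (Function.update lam a 0) m := by
  ext r s
  rw [LamD, LamD, Matrix.add_apply, Matrix.smul_apply, Ei_apply,
    Matrix.diagonal_apply, Matrix.diagonal_apply]
  by_cases hrs : r = s
  · subst hrs
    rw [if_pos rfl, if_pos rfl]
    by_cases h : r m = a
    · have h1 : Function.update lam a t (r m) = t := by rw [h, Function.update_self]
      have h2 : Function.update lam a (0:ℂ) (r m) = 0 := by rw [h, Function.update_self]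
      have h3 : r = Function.update r m a := by
        funext x
        by_cases hx : x = m
        · subst hx; rw [Function.update_self, h]
        · rw [Function.update_of_ne hx]
      rw [h1, h2, if_pos ⟨h3, h⟩]
      simp
    · rw [Function.update_of_ne h, Function.update_of_ne h, if_neg (fun hc => h hc.2)]
      simp
  · rw [if_neg hrs, if_neg hrs]
    have hcond : ¬ (r = Function.update s m a ∧ s m = a) := by
      rintro ⟨h1, h2⟩
      apply hrs
      rw [h1]
      funext x
      by_cases hx : x = m
      · subst hx; rw [Function.update_self, h2]
      · rw [Function.update_of_ne hx]
    rw [if_neg hcond]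
    simp

lemma core_identity (p : ℂ) (z : Fin n → ℂ) (lam : Fin N → ℂ)
    (hlam : Function.Injective lam) (m : Fin n) (a : Fin N) :
    LamD lam m * (Sv lam a - XS m a (Finset.univ.filter fun l => m < l) z)
      - (Sv lam a - XS m a (Finset.univ.filter fun l => l < m)
          (Function.update z m (z m + p))) * LamD lam m
    = (p * lam a) • Ei m a a := by
  rw [XS, XS]
  have h2 := F2 lam hlam m a
  have hDg := Dg_part p z lam m a
  have hPair := Pair_part lam m a
  have expand : ∀ (L S DB PB DA PA : EndW N n),
      L * (S - (DB + PB)) - (S - (DA + PA)) * L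
      = (L * S - S * L) + ((DA * L - L * DB) + (PA * L - L * PB)) := by
    intros L S DB PB DA PA
    rw [mul_sub, sub_mul, mul_add, add_mul]
    abel
  rw [expand, h2, hDg, hPair]
  abel

end Assemble


/-- Compatibility of the qKZ and dynamical operators: `λ ↦ K_m(z;λ)` is differentiable
in `λ_a` and `p λ_a ∂K_m/∂λ_a = K_m(z;λ) L_a(z;λ) − L_a(z_1,…,z_m+p,…,z_n;λ) K_m(z;λ)`,
i.e. the qKZ operator `Z_m = K_m(z;λ)⁻¹ T_{z_m}` commutes with the dynamical operator
`D_a = p λ_a ∂/∂λ_a + L_a(z;λ)`. -/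
theorem qKZ_compatible_with_dynamical {N n : ℕ}
    (p : ℂ) (hp : p ≠ 0)
    (lam : Fin N → ℂ) (hlam0 : ∀ a, lam a ≠ 0) (hlam : Function.Injective lam)
    (z : Fin n → ℂ) (hz : ZGeneric p z)
    (m : Fin n) (a : Fin N) :
    ∃ D : EndW N n,
      HasDerivAt (fun t : ℂ => Kqkz p z (Function.update lam a t) m) D (lam a) ∧
      (p * lam a) • D
        = Kqkz p z lam m * Ldyn z lam a
          - Ldyn (Function.update z m (z m + p)) lam a * Kqkz p z lam m := by
  classical
  set z' : Fin n → ℂ := Function.update z m (z m + p) with hz'def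
  -- inverse of Kleft
  obtain ⟨C, hC1, hC2⟩ : ∃ C, (Kleft p z m : EndW N n) * C = 1 ∧ C * Kleft p z m = 1 := by
    rw [Kleft]
    apply prod_two_sided_inv
    intro R hR
    rw [List.mem_map] at hR
    obtain ⟨i, hiM, rfl⟩ := hR
    have him : i < m := by
      rw [List.mem_filter] at hiM
      exact of_decide_eq_true hiM.2
    have hgen := hz i m (ne_of_lt him) (z i - z m - p) (by right; right; rfl)
    refine ⟨(Rm (-(z i - z m - p)) i m : EndW N n), Rm_mul_Rm_neg hgen.1 hgen.2 i m, ?_⟩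
    have h1 : -(z i - z m - p) ≠ 1 := fun h => hgen.2 (by linear_combination -h)
    have h2 : -(z i - z m - p) ≠ -1 := fun h => hgen.1 (by linear_combination -h)
    have h3 := Rm_mul_Rm_neg (N := N) (n := n) h1 h2 i m
    rwa [neg_neg] at h3
  have hAinv : (Kleft p z m : EndW N n)⁻¹ = C := Matrix.inv_eq_right_inv hC1
  have hinv1 : (Kleft p z m : EndW N n) * (Kleft p z m)⁻¹ = 1 := by rw [hAinv]; exact hC1
  have hinv2 : (Kleft p z m : EndW N n)⁻¹ * Kleft p z m = 1 := by rw [hAinv]; exact hC2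
  -- conjugation by Kright
  have hBX : Kright z m * XS m a ∅ z
      = XS m a (Finset.univ.filter fun l => m < l) z * Kright z m := by
    rw [Kright]
    have hpw : (((List.finRange n).filter (fun j => m < j)).reverse).Pairwise (· > ·) := by
      rw [List.pairwise_reverse]
      exact (List.pairwise_lt_finRange n).filter _
    have hmem : ∀ j, j ∈ ((List.finRange n).filter (fun j => m < j)).reverse ↔ m < j := by
      intro j
      rw [List.mem_reverse, List.mem_filter]
      simp [List.mem_finRange]
    have htf : (((List.finRange n).filter (fun j => m < j)).reverse).toFinset
        = Finset.univ.filter fun l => m < l := by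
      ext l
      rw [List.mem_toFinset, hmem, Finset.mem_filter]
      simp
    have := conjR z m a (((List.finRange n).filter (fun j => m < j)).reverse) hpw
      (fun j hj => (hmem j).mp hj)
      (fun l j hj h1 h2 => (hmem l).mpr h1)
    rwa [htf] at this
  have hBSv : Kright z m * Sv lam a = Sv lam a * Kright z m := by
    rw [Kright]
    apply prod_conj_of_comm
    intro A hA
    rw [List.mem_map] at hA
    obtain ⟨j, _, rfl⟩ := hA
    exact Rm_comm_Sv lam a _ m j
  -- conjugation by Kleft
  have hKleq : (Kleft p z m : EndW N n)
      = (((List.finRange n).filter (fun i => i < m)).map fun i => Rm (z' i - z' m) i m).prod := by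
    rw [Kleft]
    congr 1
    apply List.map_congr_left
    intro i hi
    have him : i < m := by
      rw [List.mem_filter] at hi
      exact of_decide_eq_true hi.2
    rw [hz'def, Function.update_of_ne (ne_of_lt him), Function.update_self, sub_sub]
  have hAX : Kleft p z m * XS m a ∅ z'
      = XS m a (Finset.univ.filter fun l => l < m) z' * Kleft p z m := by
    rw [hKleq]
    have hpw : ((List.finRange n).filter (fun i => i < m)).Pairwise (· < ·) :=
      (List.pairwise_lt_finRange n).filter _
    have hmem : ∀ i, i ∈ (List.finRange n).filter (fun i => i < m) ↔ i < m := by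
      intro i
      rw [List.mem_filter]
      simp [List.mem_finRange]
    have htf : (((List.finRange n).filter (fun i => i < m))).toFinset
        = Finset.univ.filter fun l => l < m := by
      ext l
      rw [List.mem_toFinset, hmem, Finset.mem_filter]
      simp
    have := conjL z' m a ((List.finRange n).filter (fun i => i < m)) hpw
      (fun i hi => (hmem i).mp hi)
      (fun l i hi h1 h2 => (hmem l).mpr h2)
    rwa [htf] at this
  have hASv : Kleft p z m * Sv lam a = Sv lam a * Kleft p z m := by
    rw [Kleft]
    apply prod_conj_of_comm
    intro A hA
    rw [List.mem_map] at hA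
    obtain ⟨i, _, rfl⟩ := hA
    exact Rm_comm_Sv lam a _ i m
  -- the derivative
  refine ⟨(Kleft p z m)⁻¹ * Ei m a a * Kright z m, ?_, ?_⟩
  · have hfun : (fun t : ℂ => Kqkz p z (Function.update lam a t) m)
        = fun t : ℂ => t • ((Kleft p z m)⁻¹ * Ei m a a * Kright z m)
            + (Kleft p z m)⁻¹ * LamD (Function.update lam a 0) m * Kright z m := by
      funext t
      rw [Kqkz, LamD_update lam a m t, mul_add, add_mul, mul_smul_comm, smul_mul_assoc]
    rw [hfun]
    have hd := ((hasDerivAt_id (lam a)).smul_const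
        ((Kleft p z m)⁻¹ * Ei m a a * Kright z m)).add_const
        ((Kleft p z m)⁻¹ * LamD (Function.update lam a 0) m * Kright z m)
    simp only [one_smul, id] at hd
    exact hd
  · -- main identity
    have hKL : Kqkz p z lam m * Ldyn z lam a
        = (Kleft p z m)⁻¹ * (LamD lam m
            * (Sv lam a - XS m a (Finset.univ.filter fun l => m < l) z)) * Kright z m := by
      rw [Kqkz, Ldyn_eq z lam a m]
      have hB : Kright z m * (Sv lam a - XS m a ∅ z)
          = (Sv lam a - XS m a (Finset.univ.filter fun l => m < l) z) * Kright z m := by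
        rw [mul_sub, sub_mul, hBSv, hBX]
      calc (Kleft p z m)⁻¹ * LamD lam m * Kright z m * (Sv lam a - XS m a ∅ z)
          = (Kleft p z m)⁻¹ * (LamD lam m * (Kright z m * (Sv lam a - XS m a ∅ z))) := by
            simp only [mul_assoc]
        _ = (Kleft p z m)⁻¹ * (LamD lam m
              * ((Sv lam a - XS m a (Finset.univ.filter fun l => m < l) z) * Kright z m)) := by
            rw [hB]
        _ = _ := by simp only [mul_assoc]
    have hA' : Kleft p z m * (Sv lam a - XS m a ∅ z')
        = (Sv lam a - XS m a (Finset.univ.filter fun l => l < m) z') * Kleft p z m := by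
      rw [mul_sub, sub_mul, hASv, hAX]
    have hLK : Ldyn z' lam a * Kqkz p z lam m
        = (Kleft p z m)⁻¹ * ((Sv lam a - XS m a (Finset.univ.filter fun l => l < m) z')
            * LamD lam m) * Kright z m := by
      rw [Kqkz, Ldyn_eq z' lam a m]
      have hmove : (Sv lam a - XS m a ∅ z') * (Kleft p z m)⁻¹
          = (Kleft p z m)⁻¹ * (Sv lam a - XS m a (Finset.univ.filter fun l => l < m) z') := by
        calc (Sv lam a - XS m a ∅ z') * (Kleft p z m)⁻¹
            = ((Kleft p z m)⁻¹ * Kleft p z m) * ((Sv lam a - XS m a ∅ z') * (Kleft p z m)⁻¹) := by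
              rw [hinv2, one_mul]
          _ = (Kleft p z m)⁻¹ * ((Kleft p z m * (Sv lam a - XS m a ∅ z')) * (Kleft p z m)⁻¹) := by
              simp only [mul_assoc]
          _ = (Kleft p z m)⁻¹ * ((Sv lam a - XS m a (Finset.univ.filter fun l => l < m) z')
                * (Kleft p z m * (Kleft p z m)⁻¹)) := by
              rw [hA']
              simp only [mul_assoc]
          _ = _ := by rw [hinv1, mul_one]
      calc (Sv lam a - XS m a ∅ z') * ((Kleft p z m)⁻¹ * LamD lam m * Kright z m)
          = ((Sv lam a - XS m a ∅ z') * (Kleft p z m)⁻¹) * LamD lam m * Kright z m := by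
            simp only [mul_assoc]
        _ = ((Kleft p z m)⁻¹ * (Sv lam a - XS m a (Finset.univ.filter fun l => l < m) z'))
              * LamD lam m * Kright z m := by rw [hmove]
        _ = _ := by simp only [mul_assoc]
    rw [hKL, hLK, ← sub_mul, ← mul_sub, core_identity p z lam hlam m a,
      mul_smul_comm, smul_mul_assoc]
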